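/- Let G = Q₈ × ℤ/2ℤ where Q₈ is the quaternion group, and let ψ₁ be the automorphism ψ₁(a, n) = (ψ(a), n), where ψ cyclically permutes i, j, k. Then the orbit P of the identity under the inner automorphism group of the generalized Alexander quandle Q(G, ψ₁) equals Q₈ × {0}. -/

import Mathlib

/-- The generalized Alexander quandle operation on a group `G` with automorphism `ψ`. -/
def gaOp {G : Type*} [Group G] (ψ : G ≃* G) (x y : G) : G := y * ψ (y⁻¹ * x)

/-- The point symmetry `s_y : x ↦ x * y = y·ψ(y⁻¹x)` as a permutation of `G`. -/
def ptSym {G : Type*} [Group G] (ψ : G ≃* G) (y : G) : Equiv.Perm G :=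
  (Equiv.mulLeft y⁻¹).trans (ψ.toEquiv.trans (Equiv.mulLeft y))

/-- The inner automorphism group of `Q(G,ψ)`: the group of permutations of `G`
generated by the point symmetries. -/
def innGroup {G : Type*} [Group G] (ψ : G ≃* G) : Subgroup (Equiv.Perm G) :=
  Subgroup.closure (Set.range (ptSym ψ))

/-- `P(Q(G,ψ))`: the orbit of the identity element under `Inn(Q(G,ψ))`. -/
def innOrbit {G : Type*} [Group G] (ψ : G ≃* G) : Set G :=
  {g | ∃ f ∈ innGroup ψ, f 1 = g}

section Aux

variable {G : Type*} [Group G] (ψ : G ≃* G)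

lemma ptSym_apply (y x : G) : ptSym ψ y x = y * ψ (y⁻¹ * x) := rfl

lemma ptSym_one : ptSym ψ 1 = MulAut.toPerm G ψ := by
  ext x
  simp [ptSym, MulAut.toPerm]
  rfl

lemma toPerm_mem : MulAut.toPerm G ψ ∈ innGroup ψ := by
  rw [← ptSym_one]
  exact Subgroup.subset_closure ⟨1, rfl⟩

lemma toPerm_zpow_mem (n : ℤ) : (MulAut.toPerm G ψ) ^ n ∈ innGroup ψ :=
  zpow_mem (toPerm_mem ψ) n

lemma innGroup_struct {f : Equiv.Perm G} (hf : f ∈ innGroup ψ) :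
    ∃ n : ℤ, ∀ x, f x = f 1 * ((ψ : MulAut G) ^ n) x := by
  induction hf using Subgroup.closure_induction with
  | mem g hg =>
      obtain ⟨y, rfl⟩ := hg
      refine ⟨1, fun x => ?_⟩
      simp [ptSym_apply, map_mul, mul_assoc]
  | one => exact ⟨0, fun x => by simp⟩
  | mul f g hf hg ihf ihg =>
      obtain ⟨n, hn⟩ := ihf
      obtain ⟨m, hm⟩ := ihg
      refine ⟨n + m, fun x => ?_⟩
      have h1 : (f * g) x = f 1 * ((ψ : MulAut G) ^ n) (g 1 * ((ψ : MulAut G) ^ m) x) := by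
        rw [Equiv.Perm.mul_apply, hm x, ← hn]
      have h2 : (f * g) 1 = f 1 * ((ψ : MulAut G) ^ n) (g 1) := by
        rw [Equiv.Perm.mul_apply, hn (g 1)]
      rw [h1, h2, map_mul, mul_assoc]
      congr 2
      rw [zpow_add, MulAut.mul_apply]
  | inv f hf ihf =>
      obtain ⟨n, hn⟩ := ihf
      refine ⟨-n, fun x => ?_⟩
      have key : ∀ x, f⁻¹ x = ((ψ : MulAut G) ^ (-n)) ((f 1)⁻¹ * x) := by
        intro x
        have h1 : f 1 * ((ψ : MulAut G) ^ n) (f⁻¹ x) = x := by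
          conv_rhs => rw [← show f (f⁻¹ x) = x from Equiv.apply_symm_apply f x, hn]
        have h2 : ((ψ : MulAut G) ^ n) (f⁻¹ x) = (f 1)⁻¹ * x :=
          eq_inv_mul_iff_mul_eq.mpr h1
        calc f⁻¹ x = ((ψ : MulAut G) ^ (-n)) (((ψ : MulAut G) ^ n) (f⁻¹ x)) := by
              rw [← MulAut.mul_apply, ← zpow_add]
              simp
          _ = ((ψ : MulAut G) ^ (-n)) ((f 1)⁻¹ * x) := by rw [h2]
      rw [key x, key 1, mul_one, map_mul]

lemma innOrbit_one_mem : (1 : G) ∈ innOrbit ψ :=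
  ⟨1, Subgroup.one_mem _, rfl⟩

lemma innOrbit_gen_mem (y : G) : y * ψ y⁻¹ ∈ innOrbit ψ :=
  ⟨ptSym ψ y, Subgroup.subset_closure ⟨y, rfl⟩, by simp [ptSym_apply]⟩

lemma innOrbit_mul_mem {a b : G} (ha : a ∈ innOrbit ψ) (hb : b ∈ innOrbit ψ) :
    a * b ∈ innOrbit ψ := by
  obtain ⟨f, hf, rfl⟩ := ha
  obtain ⟨g, hg, rfl⟩ := hb
  obtain ⟨n, hn⟩ := innGroup_struct ψ hf
  refine ⟨f * ((MulAut.toPerm G ψ) ^ n)⁻¹ * g,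
    mul_mem (mul_mem hf (inv_mem (toPerm_zpow_mem ψ n))) hg, ?_⟩
  have e : (((MulAut.toPerm G ψ) ^ n)⁻¹) (g 1) = (((ψ : MulAut G) ^ n)⁻¹) (g 1) := by
    rw [← map_zpow, ← map_inv]
    rfl
  rw [Equiv.Perm.mul_apply, Equiv.Perm.mul_apply, e, hn, MulAut.apply_inv_self]

lemma innOrbit_inv_mem {a : G} (ha : a ∈ innOrbit ψ) : a⁻¹ ∈ innOrbit ψ := by
  obtain ⟨f, hf, rfl⟩ := ha
  obtain ⟨n, hn⟩ := innGroup_struct ψ hf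
  refine ⟨(MulAut.toPerm G ψ) ^ n * f⁻¹, mul_mem (toPerm_zpow_mem ψ n) (inv_mem hf), ?_⟩
  have h1 : f 1 * ((ψ : MulAut G) ^ n) (f⁻¹ 1) = 1 := by
    conv_rhs => rw [← show f (f⁻¹ 1) = 1 from Equiv.apply_symm_apply f 1, hn]
  have h2 : ((ψ : MulAut G) ^ n) (f⁻¹ 1) = (f 1)⁻¹ :=
    eq_inv_of_mul_eq_one_right h1
  have e : ((MulAut.toPerm G ψ) ^ n) (f⁻¹ 1) = ((ψ : MulAut G) ^ n) (f⁻¹ 1) := by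
    rw [← map_zpow]
    rfl
  rw [Equiv.Perm.mul_apply, e, h2]

end Aux

theorem innOrbit_of_Q8_times_Z2
    (Q8 : Type*) [Group Q8] [Fintype Q8] (hcard : Fintype.card Q8 = 8)
    (i j k : Q8)
    (hijk : i * j * k = i ^ 2) (hij : i ^ 2 = j ^ 2) (hjk : j ^ 2 = k ^ 2)
    (h4 : (i ^ 2) ^ 2 = 1) (hne : i ^ 2 ≠ 1)
    (hgen : Subgroup.closure {i, j, k} = (⊤ : Subgroup Q8))
    (ψ : Q8 ≃* Q8) (hψi : ψ i = j) (hψj : ψ j = k) (hψk : ψ k = i) :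
    innOrbit (ψ.prodCongr (MulEquiv.refl (Multiplicative (ZMod 2))))
      = {x : Q8 × Multiplicative (ZMod 2) | x.2 = 1} := by
  set ψ1 := ψ.prodCongr (MulEquiv.refl (Multiplicative (ZMod 2))) with hψ1
  have hk : k = j⁻¹ * i⁻¹ * i ^ 2 := by
    calc k = (i * j)⁻¹ * (i * j * k) := by group
    _ = (i * j)⁻¹ * i ^ 2 := by rw [hijk]
    _ = j⁻¹ * i⁻¹ * i ^ 2 := by group
  have ha : i * j⁻¹ = k⁻¹ := by
    calc i * j⁻¹ = i⁻¹ * i ^ 2 * j⁻¹ := by group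
    _ = i⁻¹ * j ^ 2 * j⁻¹ := by rw [hij]
    _ = i⁻¹ * j := by group
    _ = k⁻¹ := by rw [hk]; group
  have hb : j * k⁻¹ = i⁻¹ := by
    calc j * k⁻¹ = j⁻¹ * j ^ 2 * k⁻¹ := by group
    _ = j⁻¹ * k ^ 2 * k⁻¹ := by rw [hjk]
    _ = j⁻¹ * k := by group
    _ = j⁻¹ * (j⁻¹ * i⁻¹ * i ^ 2) := by rw [hk]
    _ = (j ^ 2)⁻¹ * i⁻¹ * i ^ 2 := by group
    _ = (i ^ 2)⁻¹ * i⁻¹ * i ^ 2 := by rw [hij]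
    _ = i⁻¹ := by group
  have hc : k * i⁻¹ = j⁻¹ := by rw [hk]; group
  ext x
  simp only [Set.mem_setOf_eq]
  constructor
  · rintro ⟨f, hf, rfl⟩
    have key : ∀ z : Q8 × Multiplicative (ZMod 2), (f z).2 = z.2 := by
      induction hf using Subgroup.closure_induction with
      | mem g hg =>
          obtain ⟨y, rfl⟩ := hg
          intro z
          have e2 : (ψ1 (y⁻¹ * z)).2 = (y⁻¹ * z).2 := rfl
          rw [ptSym_apply, Prod.snd_mul, e2, Prod.snd_mul, Prod.snd_inv,
            mul_inv_cancel_left]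
      | one => intro z; rfl
      | mul f g hf hg ihf ihg =>
          intro z
          rw [Equiv.Perm.mul_apply, ihf, ihg]
      | inv f hf ihf =>
          intro z
          have h := ihf (f⁻¹ z)
          rw [show f (f⁻¹ z) = z from Equiv.apply_symm_apply f z] at h
          exact h.symm
    exact key 1
  · intro hx
    obtain ⟨a, t⟩ := x
    change t = 1 at hx
    subst hx
    let T : Subgroup Q8 :=
      { carrier := {a : Q8 | ((a, (1 : Multiplicative (ZMod 2))) : Q8 × Multiplicative (ZMod 2))
          ∈ innOrbit ψ1}
        one_mem' := innOrbit_one_mem ψ1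
        mul_mem' := fun {a b} ha hb => by
          have := innOrbit_mul_mem ψ1 ha hb
          simpa using this
        inv_mem' := fun {a} ha => by
          have := innOrbit_inv_mem ψ1 ha
          simpa using this }
    have hTkey : ∀ a : Q8, a * ψ a⁻¹ ∈ T := by
      intro a
      have h := innOrbit_gen_mem ψ1 ((a, (1 : Multiplicative (ZMod 2))))
      have e : ((a, (1 : Multiplicative (ZMod 2))) : Q8 × Multiplicative (ZMod 2)) *
          ψ1 ((a, (1 : Multiplicative (ZMod 2))))⁻¹ = (a * ψ a⁻¹, 1) := by
        refine Prod.ext rfl ?_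
        show (1 : Multiplicative (ZMod 2)) * (1 : Multiplicative (ZMod 2))⁻¹ = 1
        simp
      rw [e] at h
      exact h
    have hiT : i ∈ T := by
      have h := hTkey j
      rw [map_inv, hψj, hb] at h
      exact inv_mem_iff.mp h
    have hjT : j ∈ T := by
      have h := hTkey k
      rw [map_inv, hψk, hc] at h
      exact inv_mem_iff.mp h
    have hkT : k ∈ T := by
      have h := hTkey i
      rw [map_inv, hψi, ha] at h
      exact inv_mem_iff.mp h
    have hle : Subgroup.closure {i, j, k} ≤ T := by
      rw [Subgroup.closure_le]
      rintro x (rfl | rfl | rfl) <;> assumption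
    rw [hgen] at hle
    exact hle (Subgroup.mem_top a)
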